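/- For 1 ≤ μ < ω₁: S is μth-order guessable if and only if S ∈ Δ⁰_{μ+1}. -/

import Mathlib

open Filter Topology Classical

/-- The initial segment `f↾n` of an infinite sequence. -/
def res (f : ℕ → ℕ) (n : ℕ) : List ℕ := List.ofFn (fun i : Fin n => f i)

/-- `[X]`: the set of infinite sequences all of whose finite initial segments lie in `X`. -/
def seqsIn (X : Set (List ℕ)) : Set (ℕ → ℕ) := {f | ∀ n, res f n ∈ X}

/-- The simplified remainder `S_α`. -/
noncomputable def SRem (S : Set (ℕ → ℕ)) (α : Ordinal.{0}) : Set (List ℕ) :=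
  Ordinal.limitRecOn α Set.univ
    (fun _ prev => {x | x ∈ prev ∧ ∃ f g : ℕ → ℕ,
      f ∈ seqsIn prev ∧ g ∈ seqsIn prev ∧ res f x.length = x ∧ res g x.length = x ∧
      f ∈ S ∧ g ∉ S})
    (fun _ _ ih => ⋂ (β : Ordinal.{0}) (h : β < _), ih β h)

/-- Wadge's remainder `Rm_μ(A,B)`. -/
noncomputable def Rm (A B : Set (ℕ → ℕ)) (μ : Ordinal.{0}) : Set (ℕ → ℕ) :=
  if μ = 0 then Set.univ
  else ⋂ (ν : {ν : Ordinal.{0} // ν < μ}),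
    closure (Rm A B ν.1 ∩ A) ∩ closure (Rm A B ν.1 ∩ B)
termination_by μ
decreasing_by exact ν.2

/-- The least ordinal at which the simplified remainders stabilize. -/
noncomputable def alphaS (S : Set (ℕ → ℕ)) : Ordinal.{0} :=
  sInf {α | SRem S α = SRem S (α + 1)}

/-- `S_∞`, the stable value of the simplified remainders. -/
noncomputable def Sinf (S : Set (ℕ → ℕ)) : Set (List ℕ) := SRem S (alphaS S)

/-- `β(σ)`: the least ordinal `γ` with `σ ∉ S_γ`. -/
noncomputable def betaOf (S : Set (ℕ → ℕ)) (σ : List ℕ) : Ordinal.{0} :=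
  sInf {γ | σ ∉ SRem S γ}

/-- `G` guesses `S`. -/
def Guesses (G : List ℕ → Bool) (S : Set (ℕ → ℕ)) : Prop :=
  ∀ f : ℕ → ℕ, ∀ᶠ n in atTop, (G (res f n) = true ↔ f ∈ S)

def Guessable (S : Set (ℕ → ℕ)) : Prop := ∃ G, Guesses G S

/-- `G, H` witness that `S` is guessable with `< α` mind changes. -/
def WitnessMC (S : Set (ℕ → ℕ)) (α : Ordinal.{0}) (G : List ℕ → Bool)
    (H : List ℕ → Ordinal.{0}) : Prop :=
  Guesses G S ∧ (∀ σ, H σ < α) ∧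
  (∀ (f : ℕ → ℕ) (n : ℕ), H (res f (n + 1)) ≤ H (res f n)) ∧
  (∀ (f : ℕ → ℕ) (n : ℕ), G (res f (n + 1)) ≠ G (res f n) →
    H (res f (n + 1)) < H (res f n))

def GuessableMC (S : Set (ℕ → ℕ)) (α : Ordinal.{0}) : Prop := ∃ G H, WitnessMC S α G H

/-- An ordinal is even if it is of the form `λ + n` with `λ` limit or zero and `n` even. -/
def OrdEven (o : Ordinal.{0}) : Prop :=
  ∃ (l : Ordinal.{0}) (n : ℕ), (l = 0 ∨ Order.IsSuccLimit l) ∧ o = l + n ∧ Even n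

/-- The Hausdorff difference set `D_α((A_η)_{η<α})`. -/
def DSet (α : Ordinal.{0}) (A : Ordinal.{0} → Set (ℕ → ℕ)) : Set (ℕ → ℕ) :=
  {x | ∃ η, η < α ∧ x ∈ A η ∧ (∀ η', η' < η → x ∉ A η') ∧ (OrdEven η ↔ ¬ OrdEven α)}

/-- Membership in the class `D_α(Σ⁰₁)`. -/
def InDiff (α : Ordinal.{0}) (S : Set (ℕ → ℕ)) : Prop :=
  ∃ A : Ordinal.{0} → Set (ℕ → ℕ), (∀ η, η < α → IsOpen (A η)) ∧
    (∀ η η', η ≤ η' → η' < α → A η ⊆ A η') ∧ S = DSet α A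
/-- Wadge's `Rm_Ω(S)`: the stable value of `Rm_μ(S, Sᶜ)`. -/
noncomputable def RmInf (S : Set (ℕ → ℕ)) : Set (ℕ → ℕ) :=
  Rm S Sᶜ (sInf {μ : Ordinal.{0} | Rm S Sᶜ μ = Rm S Sᶜ (μ + 1)})

/-- The canonical guesser `G_S`. -/
noncomputable def GS (S : Set (ℕ → ℕ)) (σ : List ℕ) : Bool :=
  if (∃ f : ℕ → ℕ, res f σ.length = σ ∧ f ∈ seqsIn (SRem S (betaOf S σ - 1))) then
    decide (∃ f : ℕ → ℕ, res f σ.length = σ ∧ f ∈ seqsIn (SRem S (betaOf S σ - 1)) ∧ f ∈ S)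
  else if h : σ = [] then false
  else GS S σ.dropLast
termination_by σ.length
decreasing_by
  simp only [List.length_dropLast]
  exact Nat.sub_lt (List.length_pos_iff.mpr h) one_pos

/-- `S` is `F_σ`: a countable union of closed sets. -/
def IsFsigma (S : Set (ℕ → ℕ)) : Prop :=
  ∃ C : ℕ → Set (ℕ → ℕ), (∀ n, IsClosed (C n)) ∧ S = ⋃ n, C n

/-- Boolean combinations of open sets. -/
inductive BoolComb : Set (ℕ → ℕ) → Prop
  | isOpen {s : Set (ℕ → ℕ)} : IsOpen s → BoolComb s
  | compl {s : Set (ℕ → ℕ)} : BoolComb s → BoolComb sᶜ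
  | union {s t : Set (ℕ → ℕ)} : BoolComb s → BoolComb t → BoolComb (s ∪ t)

/-- The Borel class `Σ⁰_α` on Baire space (for `α ≥ 1`). -/
noncomputable def Sigma0 (α : Ordinal.{0}) : Set (Set (ℕ → ℕ)) :=
  if α = 1 then {s | IsOpen s}
  else {s | ∃ g : ℕ → Set (ℕ → ℕ), s = ⋃ n, g n ∧
    ∀ n, ∃ β : {β : Ordinal.{0} // β < α}, 1 ≤ β.1 ∧ (g n)ᶜ ∈ Sigma0 β.1}
termination_by α
decreasing_by exact β.2

/-- The ambiguous Borel class `Δ⁰_α`. -/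
noncomputable def Delta0 (α : Ordinal.{0}) : Set (Set (ℕ → ℕ)) :=
  {s | s ∈ Sigma0 α ∧ sᶜ ∈ Sigma0 α}

/-- The Boolean characteristic function. -/
noncomputable def chi (X : Set (ℕ → ℕ)) (f : ℕ → ℕ) : Bool := decide (f ∈ X)

/-- `G` guesses `S` based on the sequence of sets `Ss`. -/
def GuessesBased (G : List Bool → Bool) (Ss : ℕ → Set (ℕ → ℕ)) (S : Set (ℕ → ℕ)) : Prop :=
  ∀ f : ℕ → ℕ, ∀ᶠ n in atTop,
    (G (List.ofFn (fun i : Fin n => chi (Ss i) f)) = true ↔ f ∈ S)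

/-- `S` is `μ`th-order guessable. -/
def HigherGuessable (μ : Ordinal.{0}) (S : Set (ℕ → ℕ)) : Prop :=
  ∃ Ss : ℕ → Set (ℕ → ℕ), (∀ i, ∃ μi, μi < μ ∧ Ss i ∈ Delta0 (μi + 1)) ∧
    ∃ G : List Bool → Bool, GuessesBased G Ss S

/-!
If `G` guesses `S` based on sets `Sᵢ ∈ Δ⁰_μ`, then each `Bₙ = {f | G(𝒮(f)↾n) = true}` is a finite
Boolean combination of the `Sᵢ`, hence in `Δ⁰_μ`, and `S = ⋃_N ⋂_{n ≥ N} Bₙ`,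
`Sᶜ = ⋃_N ⋂_{n ≥ N} Bₙᶜ` are both `Σ⁰_{μ+1}`.

Conversely, write `S = ⋃ₙ ⋂ₘ Dₙₘ` and `Sᶜ = ⋃ₙ ⋂ₘ Eₙₘ` with all `Dₙₘ, Eₙₘ` of lower ambiguous
class, and interleave them into columns `T₀ = D₀, T₁ = E₀, T₂ = D₁, …`. Every `f` lies in all sets
of some column; guess the parity of the first column none of whose sets seen so far excludes `f`.
Each earlier column eventually excludes `f`, so this index stabilises at the first column containing
`f` everywhere, whose parity tells whether `f ∈ S`.
-/

open Set TopologicalSpace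

theorem IsOpen.exists_eq_iUnion_isClopen {X : Type*} [TopologicalSpace X]
    [SecondCountableTopology X] (hB : IsTopologicalBasis {s : Set X | IsClopen s})
    {U : Set X} (hU : IsOpen U) : ∃ C : ℕ → Set X, (∀ n, IsClopen (C n)) ∧ U = ⋃ n, C n := by
  obtain ⟨T, hTc, hTsub, hTU⟩ :=
    isOpen_sUnion_countable {s | IsClopen s ∧ s ⊆ U} fun s hs => hs.1.isOpen
  obtain ⟨C, hC⟩ := (hTc.insert ∅).exists_eq_range (insert_nonempty _ _)
  refine ⟨C, fun n => ?_, ?_⟩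
  · rcases (hC ▸ mem_range_self n : C n ∈ insert ∅ T) with h | h
    · exact h ▸ isClopen_empty
    · exact (hTsub h).1
  · rw [← sUnion_range, ← hC, sUnion_insert, empty_union, hTU]
    exact hB.open_eq_sUnion' hU

theorem isTopologicalBasis_isClopen_baire :
    IsTopologicalBasis {s : Set (ℕ → ℕ) | IsClopen s} :=
  (PiNat.isTopologicalBasis_cylinders _).of_isOpen_of_subset (fun _ hs => hs.isOpen) <| by
    rintro _ ⟨x, n, rfl⟩
    refine ⟨?_, PiNat.isOpen_cylinder _ x n⟩
    rw [PiNat.cylinder_eq_pi]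
    exact isClosed_set_pi fun _ _ => isClosed_singleton

theorem eq_iUnion_iInter_of_eventually_mem_iff {α : Type*} {s : Set α} {B : ℕ → Set α}
    (h : ∀ x, ∀ᶠ n in atTop, x ∈ B n ↔ x ∈ s) : s = ⋃ N, ⋂ k, B (N + k) := by
  ext x
  rw [← eventually_const (f := (atTop : Filter ℕ)) (p := x ∈ s), ← eventually_congr (h x),
    eventually_atTop]
  simp only [mem_iUnion, mem_iInter]
  refine exists_congr fun N => ⟨fun hN k => hN _ (Nat.le_add_right N k), fun hN n hn => ?_⟩
  obtain ⟨k, rfl⟩ := Nat.exists_eq_add_of_le hn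
  exact hN k

section Borel

variable {α β μ : Ordinal.{0}} {s t : Set (ℕ → ℕ)}

theorem mem_sigma0_one : s ∈ Sigma0 1 ↔ IsOpen s := by
  rw [Sigma0]; simp

theorem mem_sigma0_iff (hα : α ≠ 1) :
    s ∈ Sigma0 α ↔ ∃ g : ℕ → Set (ℕ → ℕ), s = ⋃ n, g n ∧
      ∀ n, ∃ β < α, 1 ≤ β ∧ (g n)ᶜ ∈ Sigma0 β := by
  rw [Sigma0]
  simp only [hα, if_false, mem_ofPred_eq, Subtype.exists, exists_prop]

theorem mem_sigma0_of_isOpen (hα : 1 ≤ α) (hs : IsOpen s) : s ∈ Sigma0 α := by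
  by_cases h1 : α = 1
  · rw [h1, mem_sigma0_one]; exact hs
  obtain ⟨C, hC, rfl⟩ := hs.exists_eq_iUnion_isClopen isTopologicalBasis_isClopen_baire
  rw [mem_sigma0_iff h1]
  refine ⟨C, rfl, fun n => ⟨1, lt_of_le_of_ne hα (Ne.symm h1), le_rfl, ?_⟩⟩
  rw [mem_sigma0_one]
  exact (hC n).compl.isOpen

theorem sigma0_mono (hβ : 1 ≤ β) (h : β ≤ α) : Sigma0 β ⊆ Sigma0 α := by
  intro s hs
  rcases h.eq_or_lt with rfl | hlt
  · exact hs
  by_cases hβ1 : β = 1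
  · subst hβ1
    rw [mem_sigma0_one] at hs
    exact mem_sigma0_of_isOpen hlt.le hs
  obtain ⟨g, rfl, hg⟩ := (mem_sigma0_iff hβ1).1 hs
  refine (mem_sigma0_iff (hβ.trans_lt hlt).ne').2 ⟨g, rfl, fun n => ?_⟩
  obtain ⟨γ, hγ, hγ1, hgγ⟩ := hg n
  exact ⟨γ, hγ.trans hlt, hγ1, hgγ⟩

theorem iUnion_mem_sigma0 (hα : 1 ≤ α) {s : ℕ → Set (ℕ → ℕ)} (hs : ∀ n, s n ∈ Sigma0 α) :
    ⋃ n, s n ∈ Sigma0 α := by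
  by_cases h1 : α = 1
  · subst h1
    simp only [mem_sigma0_one] at hs ⊢
    exact isOpen_iUnion hs
  choose g hg using fun n => (mem_sigma0_iff h1).1 (hs n)
  rw [mem_sigma0_iff h1]
  refine ⟨fun k => g k.unpair.1 k.unpair.2, ?_, fun k => (hg _).2 _⟩
  rw [iUnion_unpair g]
  exact iUnion_congr fun n => (hg n).1

theorem union_mem_sigma0 (hα : 1 ≤ α) (hs : s ∈ Sigma0 α) (ht : t ∈ Sigma0 α) :
    s ∪ t ∈ Sigma0 α := by
  have : s ∪ t = ⋃ n : ℕ, if n = 0 then s else t := by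
    ext x
    simp only [mem_union, mem_iUnion]
    refine ⟨fun hx => hx.elim (fun h => ⟨0, by simpa⟩) (fun h => ⟨1, by simpa⟩), ?_⟩
    rintro ⟨n, hn⟩
    split_ifs at hn
    exacts [Or.inl hn, Or.inr hn]
  rw [this]
  exact iUnion_mem_sigma0 hα fun n => by split_ifs <;> assumption

theorem inter_mem_sigma0 (hα : 1 ≤ α) (hs : s ∈ Sigma0 α) (ht : t ∈ Sigma0 α) :
    s ∩ t ∈ Sigma0 α := by
  by_cases h1 : α = 1
  · subst h1
    rw [mem_sigma0_one] at hs ht ⊢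
    exact hs.inter ht
  obtain ⟨g, rfl, hg⟩ := (mem_sigma0_iff h1).1 hs
  obtain ⟨g', rfl, hg'⟩ := (mem_sigma0_iff h1).1 ht
  rw [mem_sigma0_iff h1]
  refine ⟨fun k => g k.unpair.1 ∩ g' k.unpair.2, ?_, fun k => ?_⟩
  · rw [iUnion_inter_iUnion, ← iUnion_unpair]
  obtain ⟨β, hβ, hβ1, hgβ⟩ := hg k.unpair.1
  obtain ⟨γ, hγ, hγ1, hgγ⟩ := hg' k.unpair.2
  have hmax : 1 ≤ max β γ := hβ1.trans (le_max_left _ _)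
  refine ⟨max β γ, max_lt hβ hγ, hmax, ?_⟩
  rw [compl_inter]
  exact union_mem_sigma0 hmax (sigma0_mono hβ1 (le_max_left _ _) hgβ)
    (sigma0_mono hγ1 (le_max_right _ _) hgγ)

theorem mem_sigma0_add_one_of_compl (hβ : 1 ≤ β) (h : sᶜ ∈ Sigma0 β) : s ∈ Sigma0 (β + 1) :=
  (mem_sigma0_iff (Order.lt_add_one_iff.2 hβ).ne').2
    ⟨fun _ => s, (iUnion_const s).symm, fun _ => ⟨β, lt_add_one β, hβ, h⟩⟩

theorem iUnion_iInter_mem_sigma0_add_one (hμ : 1 ≤ μ) {B : ℕ → ℕ → Set (ℕ → ℕ)}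
    (hB : ∀ n m, (B n m)ᶜ ∈ Sigma0 μ) : ⋃ n, ⋂ m, B n m ∈ Sigma0 (μ + 1) :=
  (mem_sigma0_iff (Order.lt_add_one_iff.2 hμ).ne').2 ⟨fun n => ⋂ m, B n m, rfl, fun n =>
    ⟨μ, lt_add_one μ, hμ, by rw [compl_iInter]; exact iUnion_mem_sigma0 hμ (hB n)⟩⟩

theorem compl_mem_delta0 (hs : s ∈ Delta0 α) : sᶜ ∈ Delta0 α :=
  ⟨hs.2, by rw [compl_compl]; exact hs.1⟩

theorem union_mem_delta0 (hα : 1 ≤ α) (hs : s ∈ Delta0 α) (ht : t ∈ Delta0 α) :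
    s ∪ t ∈ Delta0 α :=
  ⟨union_mem_sigma0 hα hs.1 ht.1, by rw [compl_union]; exact inter_mem_sigma0 hα hs.2 ht.2⟩

theorem inter_mem_delta0 (hα : 1 ≤ α) (hs : s ∈ Delta0 α) (ht : t ∈ Delta0 α) :
    s ∩ t ∈ Delta0 α :=
  ⟨inter_mem_sigma0 hα hs.1 ht.1, by rw [compl_inter]; exact union_mem_sigma0 hα hs.2 ht.2⟩

theorem delta0_mono (hβ : 1 ≤ β) (h : β ≤ α) : Delta0 β ⊆ Delta0 α :=
  fun _ hs => ⟨sigma0_mono hβ h hs.1, sigma0_mono hβ h hs.2⟩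

theorem mem_delta0_of_isClopen (hα : 1 ≤ α) (hs : IsClopen s) : s ∈ Delta0 α :=
  ⟨mem_sigma0_of_isOpen hα hs.isOpen, mem_sigma0_of_isOpen hα hs.compl.isOpen⟩

theorem exists_eq_iInter_of_compl_mem_sigma0 (hβ : 1 ≤ β) (h : tᶜ ∈ Sigma0 β) :
    ∃ B : ℕ → Set (ℕ → ℕ), (∀ m, ∃ γ < β, B m ∈ Delta0 (γ + 1)) ∧ t = ⋂ m, B m := by
  by_cases hβ1 : β = 1
  · subst hβ1
    rw [mem_sigma0_one] at h
    obtain ⟨C, hC, hCU⟩ := IsOpen.exists_eq_iUnion_isClopen isTopologicalBasis_isClopen_baire h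
    refine ⟨fun m => (C m)ᶜ, fun m => ⟨0, zero_lt_one, ?_⟩, ?_⟩
    · rw [zero_add]
      exact mem_delta0_of_isClopen le_rfl (hC m).compl
    · rw [← compl_iUnion, ← hCU, compl_compl]
  obtain ⟨g, hg, hgβ⟩ := (mem_sigma0_iff hβ1).1 h
  refine ⟨fun m => (g m)ᶜ, fun m => ?_, by rw [← compl_iUnion, ← hg, compl_compl]⟩
  obtain ⟨γ, hγβ, hγ1, hgγ⟩ := hgβ m
  refine ⟨γ, hγβ, sigma0_mono hγ1 (le_add_right le_rfl) hgγ, ?_⟩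
  rw [compl_compl]
  exact mem_sigma0_add_one_of_compl hγ1 hgγ

theorem exists_eq_iUnion_iInter_of_mem_sigma0_add_one (hμ : 1 ≤ μ) (h : s ∈ Sigma0 (μ + 1)) :
    ∃ D : ℕ → ℕ → Set (ℕ → ℕ), (∀ n m, ∃ γ < μ, D n m ∈ Delta0 (γ + 1)) ∧
      s = ⋃ n, ⋂ m, D n m := by
  obtain ⟨g, rfl, hg⟩ := (mem_sigma0_iff (Order.lt_add_one_iff.2 hμ).ne').1 h
  have hgD : ∀ n, ∃ D : ℕ → Set (ℕ → ℕ), (∀ m, ∃ γ < μ, D m ∈ Delta0 (γ + 1)) ∧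
      g n = ⋂ m, D m := fun n => by
    obtain ⟨β, hβ, hβ1, hgβ⟩ := hg n
    obtain ⟨D, hD, hgD⟩ := exists_eq_iInter_of_compl_mem_sigma0 hβ1 hgβ
    exact ⟨D, fun m => (hD m).imp fun γ hγ => ⟨hγ.1.trans_le (Order.lt_add_one_iff.1 hβ), hγ.2⟩,
      hgD⟩
  choose D hD hgD using hgD
  exact ⟨D, hD, iUnion_congr hgD⟩

end Borel

theorem setOf_guess_mem_delta0 {α : Ordinal.{0}} (hα : 1 ≤ α) {Ss : ℕ → Set (ℕ → ℕ)}
    (hSs : ∀ i, Ss i ∈ Delta0 α) (n : ℕ) (G : List Bool → Bool) :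
    {f | G (List.ofFn fun i : Fin n => chi (Ss i) f) = true} ∈ Delta0 α := by
  induction n generalizing G with
  | zero =>
    by_cases hG : G [] = true
    · simpa [hG] using mem_delta0_of_isClopen hα isClopen_univ
    · simpa [hG] using mem_delta0_of_isClopen hα isClopen_empty
  | succ n ih =>
    have hsplit : {f | G (List.ofFn fun i : Fin (n + 1) => chi (Ss i) f) = true} =
        {f | G ((List.ofFn fun i : Fin n => chi (Ss i) f).concat true) = true} ∩ Ss n ∪
        {f | G ((List.ofFn fun i : Fin n => chi (Ss i) f).concat false) = true} ∩ (Ss n)ᶜ := by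
      ext f
      rw [mem_ofPred_eq, List.ofFn_succ_last]
      by_cases hf : f ∈ Ss n <;> simp [chi, hf]
    rw [hsplit]
    exact union_mem_delta0 hα (inter_mem_delta0 hα (ih fun L => G (L.concat true)) (hSs n))
      (inter_mem_delta0 hα (ih fun L => G (L.concat false)) (compl_mem_delta0 (hSs n)))

theorem mem_delta0_add_one_of_higherGuessable {μ : Ordinal.{0}} (hμ : 1 ≤ μ) {S : Set (ℕ → ℕ)}
    (h : HigherGuessable μ S) : S ∈ Delta0 (μ + 1) := by
  obtain ⟨Ss, hSs, G, hG⟩ := h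
  have hSsμ : ∀ i, Ss i ∈ Delta0 μ := fun i => by
    obtain ⟨μi, hμi, hi⟩ := hSs i
    exact delta0_mono (le_add_left le_rfl) (Order.add_one_le_iff.2 hμi) hi
  set B : ℕ → Set (ℕ → ℕ) := fun n => {f | G (List.ofFn fun i : Fin n => chi (Ss i) f) = true}
  have hB : ∀ n, B n ∈ Delta0 μ := fun n => setOf_guess_mem_delta0 hμ hSsμ n G
  constructor
  · rw [eq_iUnion_iInter_of_eventually_mem_iff (B := B) hG]
    exact iUnion_iInter_mem_sigma0_add_one hμ fun n m => (hB _).2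
  · rw [eq_iUnion_iInter_of_eventually_mem_iff (s := Sᶜ) (B := fun n => (B n)ᶜ)
      fun f => (hG f).mono fun n hn => not_congr hn]
    exact iUnion_iInter_mem_sigma0_add_one hμ fun n m => by rw [compl_compl]; exact (hB _).1

/-- Positions past the end of `L` count as `true`, so every column `j ≥ L.length` qualifies and
the infimum is attained. -/
noncomputable def firstAliveColumn (L : List Bool) : ℕ :=
  sInf {j | ∀ m, L.getD (Nat.pair j m) true = true}

noncomputable def parityGuess (L : List Bool) : Bool := decide (Even (firstAliveColumn L))

theorem getD_ofFn_eq_ite (b : ℕ → Bool) (n k : ℕ) (d : Bool) :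
    (List.ofFn fun i : Fin n => b i).getD k d = if k < n then b k else d := by
  simp only [List.getD_eq_getElem?_getD, List.getElem?_ofFn]
  split_ifs <;> simp_all

theorem eventually_firstAliveColumn_eq {b : ℕ → Bool} {c : ℕ} (hc : ∀ m, b (Nat.pair c m) = true)
    (hlt : ∀ j < c, ∃ m, b (Nat.pair j m) = false) :
    ∀ᶠ n in atTop, firstAliveColumn (List.ofFn fun i : Fin n => b i) = c := by
  choose! m hm using hlt
  have hev : ∀ᶠ n in atTop, ∀ j ∈ Iio c, Nat.pair j (m j) < n :=
    (eventually_all_finite (finite_Iio c)).2 fun j _ => eventually_gt_atTop _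
  filter_upwards [hev] with n hn
  refine IsLeast.csInf_eq ⟨fun k => ?_, fun j hj => not_lt.1 fun hjc => ?_⟩
  · rw [getD_ofFn_eq_ite]
    split_ifs
    exacts [hc k, rfl]
  · have := hj (m j)
    rw [getD_ofFn_eq_ite, if_pos (hn j hjc), hm j hjc] at this
    exact Bool.false_ne_true this

theorem guessesBased_parityGuess {S : Set (ℕ → ℕ)} (T : ℕ → ℕ → Set (ℕ → ℕ))
    (hcover : ∀ f, ∃ j, ∀ m, f ∈ T j m) (hparity : ∀ f j, (∀ m, f ∈ T j m) → (Even j ↔ f ∈ S)) :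
    GuessesBased parityGuess (fun i => T i.unpair.1 i.unpair.2) S := by
  intro f
  have hc := Nat.find_spec (hcover f)
  have hlt : ∀ j < Nat.find (hcover f), ∃ m, chi (T j m) f = false := fun j hj => by
    simpa [chi] using Nat.find_min (hcover f) hj
  filter_upwards [eventually_firstAliveColumn_eq (b := fun i => chi (T i.unpair.1 i.unpair.2) f)
    (by simpa [chi] using hc) (by simpa using hlt)] with n hn
  rw [parityGuess, hn, decide_eq_true_iff]
  exact hparity f _ hc

theorem higherGuessable_of_mem_delta0_add_one {μ : Ordinal.{0}} (hμ : 1 ≤ μ) {S : Set (ℕ → ℕ)}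
    (h : S ∈ Delta0 (μ + 1)) : HigherGuessable μ S := by
  obtain ⟨D, hD, hSD⟩ := exists_eq_iUnion_iInter_of_mem_sigma0_add_one hμ h.1
  obtain ⟨E, hE, hSE⟩ := exists_eq_iUnion_iInter_of_mem_sigma0_add_one hμ h.2
  set T : ℕ → ℕ → Set (ℕ → ℕ) := fun j => if Even j then D (j / 2) else E (j / 2) with hT
  have hTeven : ∀ n, T (2 * n) = D n := fun n => by simp [hT]
  have hTodd : ∀ n, T (2 * n + 1) = E n := fun n => by
    simp [hT, show (2 * n + 1) / 2 = n by omega]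
  refine ⟨fun i => T i.unpair.1 i.unpair.2, fun i => ?_, parityGuess,
    guessesBased_parityGuess T (fun f => ?_) (fun f j hj => ?_)⟩
  · simp only [hT]
    split_ifs
    exacts [hD _ _, hE _ _]
  · by_cases hf : f ∈ S
    · rw [hSD] at hf
      obtain ⟨n, hn⟩ := mem_iUnion.1 hf
      exact ⟨2 * n, by rw [hTeven]; exact mem_iInter.1 hn⟩
    · rw [← mem_compl_iff, hSE] at hf
      obtain ⟨n, hn⟩ := mem_iUnion.1 hf
      exact ⟨2 * n + 1, by rw [hTodd]; exact mem_iInter.1 hn⟩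
  · obtain ⟨n, rfl | rfl⟩ := Nat.even_or_odd' j
    · rw [hTeven] at hj
      simp only [even_two_mul, true_iff]
      rw [hSD]
      exact mem_iUnion.2 ⟨n, mem_iInter.2 hj⟩
    · rw [hTodd] at hj
      simp only [Nat.not_even_two_mul_add_one, false_iff, ← mem_compl_iff]
      rw [hSE]
      exact mem_iUnion.2 ⟨n, mem_iInter.2 hj⟩

theorem stmt16_general (μ : Ordinal.{0}) (h1 : 1 ≤ μ)
    (S : Set (ℕ → ℕ)) : HigherGuessable μ S ↔ S ∈ Delta0 (μ + 1) :=
  ⟨mem_delta0_add_one_of_higherGuessable h1, higherGuessable_of_mem_delta0_add_one h1⟩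

theorem stmt16 (μ : Ordinal.{0}) (h1 : 1 ≤ μ) (h2 : μ < (Cardinal.aleph 1).ord)
    (S : Set (ℕ → ℕ)) : HigherGuessable μ S ↔ S ∈ Delta0 (μ + 1) :=
  stmt16_general μ h1 S
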